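/- If 0 ≤ ε < r·cos θ, then the complement ℝ² \ S_ε of the closed ε-neighborhood of the arc is a connected set. -/

import Mathlib

/-!
Write `e₊ = (r cos θ, r sin θ)` and `e₋ = (-r cos θ, r sin θ)` for the endpoints of the arc and
call the closed sector between their directions the gap sector. A point with `|‖p‖ - r| > ε` is
farther than `ε` from the whole circle. A point with `|‖p‖ - r| ≤ ε` outside the gap sector is
within `ε` of its radial projection, which lies on the arc. Inside the gap sector the nearest point
of the arc is an endpoint. So the complement of the `ε`-neighbourhood is the inner disc, the outer
region and the part of the gap sector farther than `ε` from `e₊` and `e₋`.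

Because `ε < r cos θ`, the upper half of the vertical axis lies in the complement; it meets both
the disc and the outer region. A point of the gap sector below height `r sin θ` moves horizontally
to the axis, and one above it moves vertically into the outer region, neither time getting closer
to `e₊` or `e₋`.
-/

open Metric Set Real

local notation "ℝ²" => EuclideanSpace ℝ (Fin 2)

theorem EuclideanSpace.dist_le_dist_of_abs_sub_le {ι : Type*} [Fintype ι]
    {x y x' y' : EuclideanSpace ℝ ι} (h : ∀ i, |x i - y i| ≤ |x' i - y' i|) :
    dist x y ≤ dist x' y' := by
  simp only [EuclideanSpace.dist_eq, Real.dist_eq]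
  exact Real.sqrt_le_sqrt (Finset.sum_le_sum fun i _ => pow_le_pow_left₀ (abs_nonneg _) (h i) 2)

theorem EuclideanSpace.dist_sq_fin_two (p q : ℝ²) :
    dist p q ^ 2 = (p 0 - q 0) ^ 2 + (p 1 - q 1) ^ 2 := by
  simp [EuclideanSpace.dist_sq_eq, Fin.sum_univ_two, Real.dist_eq, sq_abs]

theorem EuclideanSpace.norm_sq_fin_two (p : ℝ²) : ‖p‖ ^ 2 = p 0 ^ 2 + p 1 ^ 2 := by
  simp [EuclideanSpace.real_norm_sq_eq, Fin.sum_univ_two]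

theorem EuclideanSpace.eta_fin_two (p : ℝ²) : !₂[p 0, p 1] = p := by
  ext i; fin_cases i <;> rfl

theorem EuclideanSpace.abs_sub_apply_le_dist {ι : Type*} [Fintype ι] (x y : EuclideanSpace ℝ ι)
    (i : ι) : |x i - y i| ≤ dist x y := by
  simpa [Real.dist_eq] using PiLp.dist_apply_le x y i

theorem EuclideanSpace.abs_le_norm_fin_two (a b : ℝ) : |b| ≤ ‖(!₂[a, b] : ℝ²)‖ := by
  simpa using PiLp.norm_apply_le (!₂[a, b] : ℝ²) 1

theorem IsClosed.mem_compl_cthickening_iff {α : Type*} [PseudoMetricSpace α] [ProperSpace α]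
    {S : Set α} (hS : IsClosed S) {ε : ℝ} (hε : 0 ≤ ε) {p : α} :
    p ∈ (cthickening ε S)ᶜ ↔ ∀ q ∈ S, ε < dist p q := by
  simp [hS.cthickening_eq_biUnion_closedBall hε]

theorem lt_dist_of_lt_abs_norm_sub {E : Type*} [SeminormedAddCommGroup E] {p q : E} {r ε : ℝ}
    (hp : ε < |‖p‖ - r|) (hq : ‖q‖ = r) : ε < dist p q := by
  rw [← hq] at hp
  exact hp.trans_le ((abs_norm_sub_norm_le p q).trans_eq (dist_eq_norm p q).symm)

theorem dist_self_div_norm_smul {E : Type*} [NormedAddCommGroup E] [NormedSpace ℝ E] {p : E}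
    (hp : p ≠ 0) (r : ℝ) : dist p ((r / ‖p‖) • p) = |‖p‖ - r| := by
  have hp' : ‖p‖ ≠ 0 := norm_ne_zero_iff.2 hp
  rw [dist_eq_norm, ← one_smul ℝ p, smul_smul, ← sub_smul, one_smul, norm_smul, Real.norm_eq_abs,
    ← abs_norm p, ← abs_mul, abs_norm]
  congr 1
  field_simp

theorem isPreconnected_setOf_lt_norm {E : Type*} [NormedAddCommGroup E] [NormedSpace ℝ E]
    (h : 1 < Module.rank ℝ E) {R : ℝ} (hR : 0 ≤ R) : IsPreconnected {p : E | R < ‖p‖} := by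
  have : {p : E | R < ‖p‖} = (fun x : ℝ × E => x.1 • x.2) '' (Ioi R ×ˢ sphere 0 1) := by
    ext p
    simp only [mem_image, mem_prod, mem_Ioi, mem_sphere_zero_iff_norm, Prod.exists]
    constructor
    · intro hp
      have hp0 : ‖p‖ ≠ 0 := (hR.trans_lt hp).ne'
      exact ⟨‖p‖, ‖p‖⁻¹ • p, ⟨hp, by simp [norm_smul, hp0]⟩, by simp [smul_smul, hp0]⟩
    · rintro ⟨t, u, ⟨ht, hu⟩, rfl⟩
      rw [mem_ofPred_eq, norm_smul, hu, mul_one, Real.norm_eq_abs]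
      exact ht.trans_le (le_abs_self t)
  rw [this]
  exact (isPreconnected_Ioi.prod (isPreconnected_sphere h 0 1)).image _
    (continuous_fst.smul continuous_snd).continuousOn

/-- In the frame rotated by `θ`, the point `(|x|, y)` of the arc has first coordinate at most `r`
and second coordinate at most `0`, while `(|a|, b)` has nonnegative coordinates. -/
theorem mul_add_mul_le_of_arc {r c s a b x y : ℝ} (hr : 0 ≤ r) (hc : 0 < c) (hs : 0 ≤ s)
    (hcs : c ^ 2 + s ^ 2 = 1) (hab : |a| * s ≤ b * c) (hxy : x ^ 2 + y ^ 2 = r ^ 2)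
    (hy : y ≤ r * s) : a * x + b * y ≤ r * (|a| * c + b * s) := by
  have hb : 0 ≤ b := by nlinarith [abs_nonneg a]
  have hP : c * |x| + s * y ≤ r := by
    refine abs_le_of_sq_le_sq' ?_ hr |>.2
    nlinarith [sq_nonneg (c * y - s * |x|), sq_abs x]
  have hQ : c * y - s * |x| ≤ 0 := by
    rcases le_or_gt y 0 with hy0 | hy0
    · nlinarith [abs_nonneg x]
    · have : r * c ≤ |x| := abs_le_of_sq_le_sq' (by nlinarith [sq_abs x]) (abs_nonneg x) |>.2
      nlinarith
  calc a * x + b * y ≤ |a| * |x| + b * y :=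
        add_le_add_left ((le_abs_self _).trans_eq (abs_mul a x)) _
    _ = (c * |x| + s * y) * (|a| * c + b * s) + (c * y - s * |x|) * (b * c - |a| * s) := by
        linear_combination (-(|a| * |x|) - b * y) * hcs
    _ ≤ r * (|a| * c + b * s) := by
        nlinarith [mul_le_mul_of_nonneg_right hP (by positivity : 0 ≤ |a| * c + b * s),
          mul_nonpos_of_nonpos_of_nonneg hQ (sub_nonneg.2 hab)]

theorem abs_sub_le_abs_mul_sub_or {a u t : ℝ} (ht : t ∈ Icc 0 1) (hau : |a| ≤ |u|) :
    |a - u| ≤ |t * a - u| ∨ |u| ≤ |t * a - u| := by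
  obtain ⟨ht0, ht1⟩ := ht
  rcases le_total 0 u with hu | hu <;> rcases le_total 0 a with ha | ha
  all_goals simp only [abs_of_nonneg, abs_of_nonpos, hu, ha] at hau
  · left; rw [abs_of_nonpos (by linarith), abs_of_nonpos (by nlinarith)]; nlinarith
  · right; rw [abs_of_nonneg hu, abs_of_nonpos (by nlinarith)]; nlinarith
  · right; rw [abs_of_nonpos hu, abs_of_nonneg (by nlinarith)]; nlinarith
  · left; rw [abs_of_nonneg (by linarith), abs_of_nonneg (by nlinarith)]; nlinarith

noncomputable def circularArc (r θ : ℝ) : Set ℝ² := {p | ‖p‖ = r ∧ p 1 ≤ r * sin θ}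

noncomputable def arcEndRight (r θ : ℝ) : ℝ² := !₂[r * cos θ, r * sin θ]

noncomputable def arcEndLeft (r θ : ℝ) : ℝ² := !₂[-(r * cos θ), r * sin θ]

noncomputable def arcGapSector (θ : ℝ) : Set ℝ² := {p | |p 0| * sin θ ≤ p 1 * cos θ}

noncomputable def arcGapRegion (r θ ε : ℝ) : Set ℝ² :=
  {p ∈ arcGapSector θ | ε < dist p (arcEndRight r θ) ∧ ε < dist p (arcEndLeft r θ)}

section
variable {r θ ε : ℝ}

theorem isClosed_circularArc : IsClosed (circularArc r θ) :=
  (isClosed_eq continuous_norm continuous_const).inter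
    (isClosed_le (PiLp.continuous_apply 2 _ 1) continuous_const)

theorem arcEndRight_mem (hr : 0 ≤ r) : arcEndRight r θ ∈ circularArc r θ := by
  refine ⟨?_, le_rfl⟩
  rw [← sq_eq_sq₀ (norm_nonneg _) hr, EuclideanSpace.norm_sq_fin_two]
  show (r * cos θ) ^ 2 + (r * sin θ) ^ 2 = r ^ 2
  linear_combination r ^ 2 * cos_sq_add_sin_sq θ

theorem arcEndLeft_mem (hr : 0 ≤ r) : arcEndLeft r θ ∈ circularArc r θ := by
  refine ⟨?_, le_rfl⟩
  rw [← sq_eq_sq₀ (norm_nonneg _) hr, EuclideanSpace.norm_sq_fin_two]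
  show (-(r * cos θ)) ^ 2 + (r * sin θ) ^ 2 = r ^ 2
  linear_combination r ^ 2 * cos_sq_add_sin_sq θ

theorem min_dist_arcEnd_le_dist (hr : 0 ≤ r) (hc : 0 < cos θ) (hs : 0 ≤ sin θ) {p q : ℝ²}
    (hp : p ∈ arcGapSector θ) (hq : q ∈ circularArc r θ) :
    min (dist p (arcEndRight r θ)) (dist p (arcEndLeft r θ)) ≤ dist p q := by
  have hq' : q 0 ^ 2 + q 1 ^ 2 = r ^ 2 := by rw [← EuclideanSpace.norm_sq_fin_two, hq.1]
  have key := mul_add_mul_le_of_arc hr hc hs (cos_sq_add_sin_sq θ) hp hq' hq.2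
  have hpq := EuclideanSpace.dist_sq_fin_two p q
  rcases le_total 0 (p 0) with h | h
  · refine min_le_of_left_le <| (sq_le_sq₀ dist_nonneg dist_nonneg).1 ?_
    rw [abs_of_nonneg h] at key
    rw [hpq, EuclideanSpace.dist_sq_fin_two]
    show (p 0 - r * cos θ) ^ 2 + (p 1 - r * sin θ) ^ 2 ≤ _
    nlinarith [cos_sq_add_sin_sq θ]
  · refine min_le_of_right_le <| (sq_le_sq₀ dist_nonneg dist_nonneg).1 ?_
    rw [abs_of_nonpos h] at key
    rw [hpq, EuclideanSpace.dist_sq_fin_two]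
    show (p 0 - -(r * cos θ)) ^ 2 + (p 1 - r * sin θ) ^ 2 ≤ _
    nlinarith [cos_sq_add_sin_sq θ]

theorem lt_norm_mul_sin_of_notMem_arcGapSector (hc : 0 < cos θ) (hs : 0 ≤ sin θ) {p : ℝ²}
    (hp : p ∉ arcGapSector θ) : p 1 < ‖p‖ * sin θ := by
  simp only [arcGapSector, mem_ofPred_eq, not_le] at hp
  have hP : sin θ * p 1 + cos θ * |p 0| ≤ ‖p‖ := by
    refine abs_le_of_sq_le_sq' ?_ (norm_nonneg p) |>.2
    rw [EuclideanSpace.norm_sq_fin_two]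
    nlinarith [sq_nonneg (sin θ * |p 0| - cos θ * p 1), sq_abs (p 0), cos_sq_add_sin_sq θ]
  have hrot : p 1 =
      sin θ * (sin θ * p 1 + cos θ * |p 0|) - cos θ * (|p 0| * sin θ - p 1 * cos θ) := by
    linear_combination (-p 1) * cos_sq_add_sin_sq θ
  nlinarith [mul_pos hc (sub_pos.2 hp), mul_le_mul_of_nonneg_left hP hs]

theorem mem_cthickening_of_notMem_arcGapSector (hr : 0 < r) (hc : 0 < cos θ) (hs : 0 ≤ sin θ)
    {p : ℝ²} (hp : p ∉ arcGapSector θ) (hpr : |‖p‖ - r| ≤ ε) :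
    p ∈ cthickening ε (circularArc r θ) := by
  have hp0 : p ≠ 0 := by
    rintro rfl
    exact hp (by simp [arcGapSector])
  have hnorm : 0 < ‖p‖ := norm_pos_iff.2 hp0
  refine mem_cthickening_of_dist_le p ((r / ‖p‖) • p) ε _ ⟨?_, ?_⟩ ?_
  · rw [norm_smul, Real.norm_eq_abs, abs_of_pos (by positivity), div_mul_cancel₀ _ hnorm.ne']
  · have := lt_norm_mul_sin_of_notMem_arcGapSector hc hs hp
    simp only [PiLp.smul_apply, smul_eq_mul]
    calc r / ‖p‖ * p 1 ≤ r / ‖p‖ * (‖p‖ * sin θ) := by gcongr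
      _ = r * sin θ := by field_simp
  · rw [dist_self_div_norm_smul hp0]; exact hpr

theorem compl_cthickening_circularArc (hr : 0 < r) (hc : 0 < cos θ) (hs : 0 ≤ sin θ)
    (hε : 0 ≤ ε) : (cthickening ε (circularArc r θ))ᶜ =
      ball 0 (r - ε) ∪ {p | r + ε < ‖p‖} ∪ arcGapRegion r θ ε := by
  ext p
  have hiff := (isClosed_circularArc (r := r) (θ := θ)).mem_compl_cthickening_iff hε (p := p)
  constructor
  · intro hX
    by_cases hA : ‖p‖ < r - ε
    · exact Or.inl (Or.inl (mem_ball_zero_iff.2 hA))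
    by_cases hC : r + ε < ‖p‖
    · exact Or.inl (Or.inr hC)
    refine Or.inr ⟨?_, hiff.1 hX _ (arcEndRight_mem hr.le), hiff.1 hX _ (arcEndLeft_mem hr.le)⟩
    by_contra hK
    exact hX (mem_cthickening_of_notMem_arcGapSector hr hc hs hK
      (abs_le.2 ⟨by linarith, by linarith⟩))
  · refine fun hp => hiff.2 fun q hq => ?_
    rcases hp with (hA | hC) | hK
    · have hA : ‖p‖ < r - ε := mem_ball_zero_iff.1 hA
      exact lt_dist_of_lt_abs_norm_sub (lt_abs.2 (Or.inr (by linarith))) hq.1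
    · have hC : r + ε < ‖p‖ := hC
      exact lt_dist_of_lt_abs_norm_sub (lt_abs.2 (Or.inl (by linarith))) hq.1
    · exact (lt_min hK.2.1 hK.2.2).trans_le (min_dist_arcEnd_le_dist hr.le hc hs hK.1 hq)

theorem mem_arcGapRegion_of_vertical (hc : 0 ≤ cos θ) {p : ℝ²} (hp : p ∈ arcGapRegion r θ ε)
    (hp1 : r * sin θ ≤ p 1) {t : ℝ} (ht : p 1 ≤ t) : !₂[p 0, t] ∈ arcGapRegion r θ ε := by
  have hfar {e : ℝ²} (he : e 1 = r * sin θ) (hpe : ε < dist p e) : ε < dist !₂[p 0, t] e := by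
    refine hpe.trans_le <| EuclideanSpace.dist_le_dist_of_abs_sub_le <|
      Fin.forall_fin_two.2 ⟨le_rfl, ?_⟩
    show |p 1 - e 1| ≤ |t - e 1|
    rw [he, abs_of_nonneg (by linarith), abs_of_nonneg (by linarith)]
    linarith
  exact ⟨hp.1.trans (mul_le_mul_of_nonneg_right ht hc), hfar rfl hp.2.1, hfar rfl hp.2.2⟩

theorem mem_arcGapRegion_of_horizontal (hc : 0 < cos θ) (hs : 0 < sin θ) (hε : ε < r * cos θ)
    {p : ℝ²} (hp : p ∈ arcGapRegion r θ ε) (hp1 : p 1 ≤ r * sin θ) {t : ℝ} (ht : t ∈ Icc 0 1) :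
    !₂[t * p 0, p 1] ∈ arcGapRegion r θ ε := by
  have hsec : |p 0| * sin θ ≤ p 1 * cos θ := hp.1
  have hp0 : |p 0| ≤ r * cos θ := by nlinarith
  have hfar {e : ℝ²} (he : r * cos θ ≤ |e 0|) (hpe : ε < dist p e) :
      ε < dist !₂[t * p 0, p 1] e := by
    rcases abs_sub_le_abs_mul_sub_or ht (hp0.trans he) with h | h
    · exact hpe.trans_le <| EuclideanSpace.dist_le_dist_of_abs_sub_le <|
        Fin.forall_fin_two.2 ⟨h, le_rfl⟩
    · exact (hε.trans_le (he.trans h)).trans_le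
        (EuclideanSpace.abs_sub_apply_le_dist !₂[t * p 0, p 1] e 0)
  refine ⟨?_, hfar (le_abs_self _) hp.2.1, hfar ((le_abs_self _).trans_eq (abs_neg _).symm) hp.2.2⟩
  show |t * p 0| * sin θ ≤ p 1 * cos θ
  rw [abs_mul, abs_of_nonneg ht.1]
  nlinarith [mul_le_mul_of_nonneg_right ht.2 (mul_nonneg (abs_nonneg (p 0)) hs.le)]

theorem mem_arcGapRegion_axis (hc : 0 ≤ cos θ) (hε : ε < r * cos θ) {t : ℝ} (ht : 0 ≤ t) :
    !₂[0, t] ∈ arcGapRegion r θ ε := by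
  have hfar {e : ℝ²} (he : r * cos θ ≤ |e 0|) : ε < dist !₂[0, t] e := by
    refine (hε.trans_le he).trans_le ?_
    simpa using EuclideanSpace.abs_sub_apply_le_dist !₂[0, t] e 0
  refine ⟨?_, hfar (le_abs_self _), hfar ((le_abs_self _).trans_eq (abs_neg _).symm)⟩
  show |(0 : ℝ)| * sin θ ≤ t * cos θ
  rw [abs_zero, zero_mul]
  positivity

theorem exists_isPreconnected_subset_arcGapRegion (hc : 0 < cos θ) (hs : 0 < sin θ)
    (hε : ε < r * cos θ) {y : ℝ²} (hy : y ∈ arcGapRegion r θ ε) :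
    ∃ t ⊆ arcGapRegion r θ ε, y ∈ t ∧ IsPreconnected t ∧
      ((∃ u, 0 ≤ u ∧ !₂[0, u] ∈ t) ∨ ∃ z ∈ t, r + ε < ‖z‖) := by
  rcases le_total (y 1) (r * sin θ) with hlow | hhigh
  · refine ⟨(fun k : ℝ => !₂[k * y 0, y 1]) '' Icc 0 1,
      image_subset_iff.2 fun k hk => mem_arcGapRegion_of_horizontal hc hs hε hy hlow hk,
      ⟨1, right_mem_Icc.2 zero_le_one, by simpa using EuclideanSpace.eta_fin_two y⟩,
      isPreconnected_Icc.image _ (by fun_prop),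
      Or.inl ⟨y 1, ?_, 0, left_mem_Icc.2 zero_le_one, by simp⟩⟩
    have hsec : |y 0| * sin θ ≤ y 1 * cos θ := hy.1
    nlinarith [abs_nonneg (y 0)]
  · refine ⟨(fun u : ℝ => !₂[y 0, u]) '' Ici (y 1),
      image_subset_iff.2 fun u hu => mem_arcGapRegion_of_vertical hc.le hy hhigh hu,
      ⟨y 1, self_mem_Ici, EuclideanSpace.eta_fin_two y⟩,
      isPreconnected_Ici.image _ (by fun_prop), Or.inr ⟨_, ⟨|y 1| + |r + ε| + 1, ?_, rfl⟩, ?_⟩⟩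
    · rw [mem_Ici]; linarith [le_abs_self (y 1), abs_nonneg (r + ε)]
    · linarith [EuclideanSpace.abs_le_norm_fin_two (y 0) (|y 1| + |r + ε| + 1), le_abs_self (r + ε),
        abs_nonneg (y 1), le_abs_self (|y 1| + |r + ε| + 1)]

theorem isConnected_ball_union_arcGapRegion (hc : 0 < cos θ) (hs : 0 < sin θ)
    (hε0 : 0 ≤ ε) (hε : ε < r * cos θ) :
    IsConnected (ball 0 (r - ε) ∪ {p : ℝ² | r + ε < ‖p‖} ∪ arcGapRegion r θ ε) := by
  have hr : 0 < r := pos_of_mul_pos_left (hε0.trans_lt hε) hc.le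
  have hrε : 0 < r - ε := by linarith [mul_le_of_le_one_right hr.le (cos_le_one θ)]
  set axis := (fun u : ℝ => !₂[0, u]) '' Ici 0
  set core := ball 0 (r - ε) ∪ axis ∪ {p : ℝ² | r + ε < ‖p‖}
  have h0 : (!₂[0, 0] : ℝ²) = 0 := by ext i; fin_cases i <;> rfl
  have hrank : 1 < Module.rank ℝ ℝ² := by
    rw [← Module.finrank_eq_rank, finrank_euclideanSpace_fin]; norm_num
  have haxis : IsPreconnected axis := isPreconnected_Ici.image _ (by fun_prop)
  have hcore : IsPreconnected core := by
    have h0_axis : (0 : ℝ²) ∈ axis := ⟨0, self_mem_Ici, h0⟩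
    have htop_axis : !₂[0, r + ε + 1] ∈ axis := ⟨_, by rw [mem_Ici]; linarith, rfl⟩
    have htop_outer : r + ε < ‖(!₂[0, r + ε + 1] : ℝ²)‖ := by
      linarith [EuclideanSpace.abs_le_norm_fin_two 0 (r + ε + 1), le_abs_self (r + ε + 1)]
    exact (isPreconnected_ball.union 0 (mem_ball_self hrε) h0_axis haxis).union _
      (Or.inr htop_axis) htop_outer (isPreconnected_setOf_lt_norm hrank (by linarith))
  have hcore_sub : core ⊆ ball 0 (r - ε) ∪ {p : ℝ² | r + ε < ‖p‖} ∪ arcGapRegion r θ ε := by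
    rintro p ((hp | ⟨u, hu, rfl⟩) | hp)
    exacts [Or.inl (Or.inl hp), Or.inr (mem_arcGapRegion_axis hc.le hε hu), Or.inl (Or.inr hp)]
  have h0_core : (0 : ℝ²) ∈ core := Or.inl (Or.inl (mem_ball_self hrε))
  refine ⟨⟨0, hcore_sub h0_core⟩, isPreconnected_of_forall 0 fun y hy => ?_⟩
  rcases hy with (hy | hy) | hy
  · exact ⟨core, hcore_sub, h0_core, Or.inl (Or.inl hy), hcore⟩
  · exact ⟨core, hcore_sub, h0_core, Or.inr hy, hcore⟩
  obtain ⟨t, ht_sub, hyt, ht, hmeet⟩ := exists_isPreconnected_subset_arcGapRegion hc hs hε hy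
  refine ⟨core ∪ t, union_subset hcore_sub (ht_sub.trans subset_union_right), Or.inl h0_core,
    Or.inr hyt, hcore.union' ?_ ht⟩
  rcases hmeet with ⟨u, hu, hut⟩ | ⟨z, hzt, hz⟩
  · exact ⟨_, Or.inl (Or.inr ⟨u, hu, rfl⟩), hut⟩
  · exact ⟨z, Or.inr hz, hzt⟩

end

theorem arc_complement_connected_before_birth
    (r θ ε : ℝ) (hr : 0 < r) (hθ : θ ∈ Set.Ioo 0 (Real.pi / 2))
    (S : Set (EuclideanSpace ℝ (Fin 2)))
    (hS : S = {p : EuclideanSpace ℝ (Fin 2) | ‖p‖ = r ∧ p 1 ≤ r * Real.sin θ})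
    (hε0 : 0 ≤ ε) (hε : ε < r * Real.cos θ) :
    IsConnected (Metric.cthickening ε S)ᶜ := by
  obtain ⟨hθ0, hθ1⟩ := hθ
  have hc : 0 < cos θ := cos_pos_of_mem_Ioo ⟨by linarith [pi_pos], hθ1⟩
  have hs : 0 < sin θ := sin_pos_of_pos_of_lt_pi hθ0 (by linarith [pi_pos])
  subst hS
  change IsConnected (cthickening ε (circularArc r θ))ᶜ
  rw [compl_cthickening_circularArc hr hc hs.le hε0]
  exact isConnected_ball_union_arcGapRegion hc hs hε0 hε
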